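/- Let T be a plane tree with n non-root nodes and let D = Ξ_steep(T) be the Dyck path obtained from the clockwise contour walk of T (appending N when an edge is traversed for the first time, E the second time). Then for each i, if u_i is the i-th non-root node visited in the clockwise contour walk, the i-th entry a_i of the area vector of D satisfies a_i = d(u_i) − 1, where d(u_i) is the depth of u_i. -/
import Mathlib


/-- A Dyck word: `true` is a north step, `false` an east step. -/
def IsDyckWord (w : List Bool) : Prop :=
  (∀ p : List Bool, p <+: w → p.count false ≤ p.count true) ∧
    w.count true = w.count false

inductive PlaneTree where
  | node : List PlaneTree → PlaneTree

namespace PlaneTree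

def childrenOf : PlaneTree → List PlaneTree
  | .node cs => cs

/-- number of children of the root -/
def arityOf (t : PlaneTree) : ℕ := t.childrenOf.length

def numNodes : PlaneTree → ℕ
  | .node cs => 1 + (cs.attach.map (fun c => numNodes c.1)).sum
decreasing_by have := List.sizeOf_lt_of_mem c.2; simp only [PlaneTree.node.sizeOf_spec]; omega

mutual
  /-- Dyck word of the clockwise contour walk of a plane tree: north (`true`) on
  the first traversal of an edge, east (`false`) on the second; children are
  visited from right to left. -/
  def steepWord : PlaneTree → List Bool
    | .node cs => steepWordAux cs
  /-- contour word of a forest (left-to-right list of trees), walked clockwise,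
  i.e. rightmost tree first. -/
  def steepWordAux : List PlaneTree → List Bool
    | [] => []
    | c :: rest => steepWordAux rest ++ (true :: (steepWord c ++ [false]))
end

end PlaneTree

/-- `a_i` of `areaList w 0` is the height of the path before its `i`-th north
step, i.e. the number of full unit squares between the path and the diagonal
with upper edge on `y = i`. -/
def areaList : List Bool → ℕ → List ℕ
  | [], _ => []
  | true :: w, h => h :: areaList w (h + 1)
  | false :: w, h => areaList w (h - 1)

namespace PlaneTree

mutual
  /-- depths of the non-root nodes of a plane tree whose root has depth `d`, in
  the order of their first visit by the clockwise contour walk. -/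
  def contourDepths : PlaneTree → ℕ → List ℕ
    | .node cs, d => contourDepthsAux cs d
  def contourDepthsAux : List PlaneTree → ℕ → List ℕ
    | [], _ => []
    | c :: rest, d => contourDepthsAux rest d ++ ((d + 1) :: contourDepths c (d + 1))
end

end PlaneTree

open PlaneTree

mutual
theorem areaA (t : PlaneTree) (w : List Bool) (h : ℕ) :
    areaList (steepWord t ++ w) h
      = (contourDepths t h).map (fun d => d - 1) ++ areaList w h := by
  cases t with
  | node cs => rw [steepWord, contourDepths]; exact areaB cs w h
theorem areaB (cs : List PlaneTree) (w : List Bool) (h : ℕ) :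
    areaList (steepWordAux cs ++ w) h
      = (contourDepthsAux cs h).map (fun d => d - 1) ++ areaList w h := by
  cases cs with
  | nil => simp [steepWordAux, contourDepthsAux]
  | cons c rest =>
    rw [steepWordAux, contourDepthsAux, List.append_assoc, areaB rest]
    simp only [List.cons_append, areaList]
    rw [List.append_assoc, areaA c]
    simp [areaList]
end

/-- **Area vector of the contour Dyck path.** If `u_i` is the `i`-th non-root
node visited by the clockwise contour walk of `T`, then the `i`-th entry of the
area vector of `D = Ξ_steep(T)` is `a_i = d(u_i) - 1`. -/
theorem areaList_steepWord (t : PlaneTree) :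
    areaList (steepWord t) 0 = (contourDepths t 0).map (fun d => d - 1) := by
  have := areaA t [] 0
  simpa [areaList] using this
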